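/- Let q = 2^n, and let α, α' ∈ F_q* be distinct. The image of the map T_{α,α'} : F_q → F_q, x ↦ x(x+α)(x+α')(x+α+α'), equals the intersection of the kernels of the two F_2-linear maps x ↦ Tr_{F_q/F_2}(x/(α²+αα')²) and x ↦ Tr_{F_q/F_2}(x/(α'²+αα')²). In particular, this image is an F_2-subspace of F_q of codimension 2. -/

import Mathlib

/-!
In characteristic 2 we have `Tr v = 0` iff `v = u² + u` (additive Hilbert 90, proved by counting),
so `y (y + c)` takes exactly the values `z` with `Tr (z / c²) = 0`.
Put `a = α² + αα'` and `b = α'² + αα'`. Then `T(x) = w (w + b)` with `w = x (x + α)`, and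
`Tr (w (w + b) / a²) = Tr (w / α²)`; so a value `z = w (w + b)` is attained by `T` iff moreover
`Tr (z / a²) = 0`. The functionals `z ↦ Tr (z / a²)` and `z ↦ Tr (z / b²)` are independent over
`𝔽₂` since `a²`, `b²` and `a² + b² = (α + α')⁴` are nonzero, so the image has index 4.
-/

open Algebra

theorem AddMonoidHom.card_ker_mul_card_of_surjective {G H : Type*} [AddGroup G] [AddGroup H]
    (f : G →+ H) (hf : Function.Surjective f) : Nat.card f.ker * Nat.card H = Nat.card G := by
  rw [← f.ker.card_mul_index, AddSubgroup.index_ker, f.range_eq_top_of_surjective hf,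
    AddSubgroup.card_top]

theorem ZMod.exists_eq_smul_add_smul_add_smul (p q r v : ZMod 2 × ZMod 2) (hp : p.1 = 1)
    (hq : q.2 = 1) (hr : r.1 + r.2 = 1) : ∃ i j k : ZMod 2, v = i • p + j • q + k • r := by
  revert p q r v
  decide

theorem Algebra.trace_pow_card {K L : Type*} [Field K] [Fintype K] [Field L] [Algebra K L]
    [Finite L] (u : L) : trace K L (u ^ Fintype.card K) = trace K L u :=
  trace_eq_of_algEquiv (FiniteField.frobeniusAlgEquivOfAlgebraic K L) u

section CharTwo

variable {F : Type*} [Field F] [Algebra (ZMod 2) F]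

instance : CharP F 2 := charP_of_injective_algebraMap' (ZMod 2) 2

theorem quartic_eq_mul_add (α α' x : F) :
    x * (x + α) * (x + α') * (x + α + α') =
      x * (x + α) * (x * (x + α) + (α' ^ 2 + α * α')) := by
  linear_combination α' * x ^ 2 * (x + α) * CharTwo.two_eq_zero (R := F)

variable (F) in
def artinSchreier : F →+ F :=
  AddMonoidHom.mk' (fun u => u ^ 2 + u) fun u v => by
    rw [CharTwo.add_sq]; ring

theorem card_ker_artinSchreier_le : Nat.card (artinSchreier F).ker ≤ 2 := by
  have hsub : ((artinSchreier F).ker : Set F) ⊆ {0, 1} := by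
    intro u (hu : u ^ 2 + u = 0)
    have : u * (u + 1) = 0 := by linear_combination hu
    rcases mul_eq_zero.mp this with h | h
    · exact .inl h
    · exact .inr (CharTwo.add_eq_zero.mp h)
  calc Nat.card (artinSchreier F).ker = ((artinSchreier F).ker : Set F).ncard :=
        Nat.card_coe_set_eq _
    _ ≤ ({0, 1} : Set F).ncard := Set.ncard_le_ncard hsub
    _ = 2 := Set.ncard_pair zero_ne_one

variable [Finite F]

theorem trace_sq_add_self (u : F) : trace (ZMod 2) F (u ^ 2 + u) = 0 := by
  have h := trace_pow_card (K := ZMod 2) u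
  rw [ZMod.card] at h
  rw [map_add, h, CharTwo.add_self_eq_zero]

theorem trace_eq_zero_iff_exists_sq_add_self (v : F) :
    trace (ZMod 2) F v = 0 ↔ ∃ u, u ^ 2 + u = v := by
  let tr : F →+ ZMod 2 := (trace (ZMod 2) F).toAddMonoidHom
  suffices (artinSchreier F).range = tr.ker from (SetLike.ext_iff.mp this v).symm
  refine AddSubgroup.eq_of_le_of_card_ge (by rintro _ ⟨u, rfl⟩; exact trace_sq_add_self u) ?_
  have hψ := (artinSchreier F).ker.card_mul_index
  rw [AddSubgroup.index_ker] at hψ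
  have htr := tr.card_ker_mul_card_of_surjective (trace_surjective (ZMod 2) F)
  rw [Nat.card_zmod] at htr
  nlinarith [card_ker_artinSchreier_le (F := F)]

theorem exists_mul_add_eq_iff_trace_div_sq {c : F} (hc : c ≠ 0) (z : F) :
    (∃ y, y * (y + c) = z) ↔ trace (ZMod 2) F (z / c ^ 2) = 0 := by
  rw [trace_eq_zero_iff_exists_sq_add_self]
  constructor
  · rintro ⟨y, rfl⟩
    exact ⟨y / c, by field_simp⟩
  · rintro ⟨u, hu⟩
    refine ⟨c * u, ?_⟩
    rw [eq_div_iff (pow_ne_zero 2 hc)] at hu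
    linear_combination hu

theorem trace_mul_add_div_sq {α α' : F} (hα : α ≠ 0) (hs : α + α' ≠ 0) (w : F) :
    trace (ZMod 2) F (w * (w + (α' ^ 2 + α * α')) / (α ^ 2 + α * α') ^ 2) =
      trace (ZMod 2) F (w / α ^ 2) := by
  have key : w * (w + (α' ^ 2 + α * α')) / (α ^ 2 + α * α') ^ 2 =
      (w / (α ^ 2 + α * α')) ^ 2 + w / (α ^ 2 + α * α') + w / α ^ 2 := by
    rw [show α ^ 2 + α * α' = α * (α + α') by ring]
    field_simp
    linear_combination -(w * α * (α + α')) * CharTwo.two_eq_zero (R := F)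
  rw [key, map_add, trace_sq_add_self, zero_add]

theorem range_quartic {α α' : F} (hα : α ≠ 0) (hα' : α' ≠ 0) (hs : α + α' ≠ 0) :
    Set.range (fun x : F => x * (x + α) * (x + α') * (x + α + α')) =
      {z : F | trace (ZMod 2) F (z / (α ^ 2 + α * α') ^ 2) = 0 ∧
               trace (ZMod 2) F (z / (α' ^ 2 + α * α') ^ 2) = 0} := by
  have hb : α' ^ 2 + α * α' ≠ 0 := by
    rw [show α' ^ 2 + α * α' = α' * (α + α') by ring]
    exact mul_ne_zero hα' hs
  ext z
  simp only [Set.mem_range, Set.mem_ofPred_eq, quartic_eq_mul_add]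
  constructor
  · rintro ⟨x, rfl⟩
    refine ⟨?_, (exists_mul_add_eq_iff_trace_div_sq hb _).mp ⟨_, rfl⟩⟩
    rw [trace_mul_add_div_sq hα hs, ← exists_mul_add_eq_iff_trace_div_sq hα]
    exact ⟨x, rfl⟩
  · rintro ⟨hza, hzb⟩
    obtain ⟨w, rfl⟩ := (exists_mul_add_eq_iff_trace_div_sq hb z).mpr hzb
    rw [trace_mul_add_div_sq hα hs, ← exists_mul_add_eq_iff_trace_div_sq hα] at hza
    obtain ⟨x, rfl⟩ := hza
    exact ⟨x, rfl⟩

theorem card_setOf_trace_div_eq_zero_and {c d : F} (hc : c ≠ 0) (hd : d ≠ 0) (hcd : c + d ≠ 0) :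
    Nat.card {z : F | trace (ZMod 2) F (z / c) = 0 ∧ trace (ZMod 2) F (z / d) = 0} * 4 =
      Nat.card F := by
  let φ : F →ₗ[ZMod 2] ZMod 2 × ZMod 2 :=
    (trace (ZMod 2) F ∘ₗ LinearMap.mulRight (ZMod 2) c⁻¹).prod
      (trace (ZMod 2) F ∘ₗ LinearMap.mulRight (ZMod 2) d⁻¹)
  have hφ (z : F) : φ z = (trace (ZMod 2) F (z / c), trace (ZMod 2) F (z / d)) := by
    simp [φ, div_eq_mul_inv]
  obtain ⟨t, ht⟩ := trace_surjective (ZMod 2) F 1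
  have hsurj : Function.Surjective φ := by
    intro v
    obtain ⟨i, j, k, rfl⟩ := ZMod.exists_eq_smul_add_smul_add_smul (φ (c * t)) (φ (d * t))
      (φ (c * d / (c + d) * t)) v (by simp [hφ, hc, ht]) (by simp [hφ, hd, ht]) (by
        rw [hφ, ← map_add, ← ht]; congr 1; field_simp; ring)
    exact ⟨i • (c * t) + j • (d * t) + k • (c * d / (c + d) * t), by simp only [map_add, map_smul]⟩
  have hker : {z : F | trace (ZMod 2) F (z / c) = 0 ∧ trace (ZMod 2) F (z / d) = 0} =
      φ.toAddMonoidHom.ker := by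
    ext z
    simp [hφ, Prod.ext_iff]
  have := φ.toAddMonoidHom.card_ker_mul_card_of_surjective hsurj
  rwa [Nat.card_prod, Nat.card_zmod, ← SetLike.coe_sort_coe, ← hker] at this

end CharTwo

/-- For distinct `α, α' ∈ 𝔽_q*`, the image of `T_{α,α'}(x) = x(x+α)(x+α')(x+α+α')`
is the intersection of the kernels of `x ↦ Tr(x/(α²+αα')²)` and `x ↦ Tr(x/(α'²+αα')²)`;
in particular it is an `𝔽₂`-subspace of codimension 2, i.e. of cardinality `2^(n-2)`. -/
theorem stmt12 (n : ℕ) (hn : 2 ≤ n) (F : Type*) [Field F] [Fintype F] [Algebra (ZMod 2) F]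
    (hF : Fintype.card F = 2 ^ n)
    (α α' : F) (hα : α ≠ 0) (hα' : α' ≠ 0) (hne : α ≠ α') :
    Set.range (fun x : F => x * (x + α) * (x + α') * (x + α + α')) =
      {z : F | Algebra.trace (ZMod 2) F (z / (α ^ 2 + α * α') ^ 2) = 0 ∧
               Algebra.trace (ZMod 2) F (z / (α' ^ 2 + α * α') ^ 2) = 0} ∧
    Nat.card (Set.range (fun x : F => x * (x + α) * (x + α') * (x + α + α'))) =
      2 ^ (n - 2) := by
  have hs : α + α' ≠ 0 := fun h => hne (CharTwo.add_eq_zero.mp h)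
  have ha : α ^ 2 + α * α' ≠ 0 := by
    rw [show α ^ 2 + α * α' = α * (α + α') by ring]
    exact mul_ne_zero hα hs
  have hb : α' ^ 2 + α * α' ≠ 0 := by
    rw [show α' ^ 2 + α * α' = α' * (α + α') by ring]
    exact mul_ne_zero hα' hs
  have hab : (α ^ 2 + α * α') ^ 2 + (α' ^ 2 + α * α') ^ 2 ≠ 0 := by
    rw [← CharTwo.add_sq, show α ^ 2 + α * α' + (α' ^ 2 + α * α') = (α + α') ^ 2 by ring]
    exact pow_ne_zero _ (pow_ne_zero _ hs)
  have hcard := card_setOf_trace_div_eq_zero_and (pow_ne_zero 2 ha) (pow_ne_zero 2 hb) hab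
  rw [Nat.card_eq_fintype_card (α := F), hF] at hcard
  refine ⟨range_quartic hα hα' hs, ?_⟩
  rw [range_quartic hα hα' hs]
  obtain ⟨k, rfl⟩ := Nat.exists_eq_add_of_le hn
  rw [Nat.add_sub_cancel_left]
  exact Nat.eq_of_mul_eq_mul_right (m := 4) (by norm_num) (hcard.trans (by ring))
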